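/- Let A be an n×n Hermitian complex matrix with all eigenvalues contained in [a,b], let v be a unit vector, and let (V_k, T̂_k, β_k, v_{k+1}) be a Lanczos relation of length k for A with starting vector v. Let t_1, …, t_k denote the eigenvalues of T̂_k and assume they lie in the open interval (a,b). If h : ℝ → ℝ is 2k times continuously differentiable on an open interval containing [a,b], then there exists ξ ∈ (a,b) such that v* h(A) v = e_1* h(T̂_k) e_1 + (h^{(2k)}(ξ)/(2k)!) · v* (∏_{j=1}^{k} (A − t_j I))² v. (This is the Gauss-quadrature error formula: the remainder integral ∫ ∏_j (t−t_j)² dγ(t) with respect to the spectral measure γ of A at v equals v* (∏_j (A − t_j I))² v.) -/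

import Mathlib

/-!
Both sides are quadratic forms against discrete measures: `v* f(A) v = ∑ᵢ wᵢ f(λᵢ)` with
`wᵢ = |(U* v)ᵢ|² ≥ 0` for an eigenbasis `U` of `A`, and `e₁* f(T̂ₖ) e₁ = ∑ⱼ μⱼ f(tⱼ)`.
The Lanczos relation gives `Aᵐ v = Vₖ T̂ₖᵐ e₁` for `m < k` (as `T̂ₖ` is tridiagonal) and
`Vₖ* A Vₖ = T̂ₖ`, so the two measures have the same moments up to degree `2k - 1`, and hence
integrate every polynomial of degree `< 2k` alike.

The subdiagonal of `T̂ₖ` is positive, so an eigenvector is determined by its first entry and the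
Ritz values `tⱼ` are distinct. Let `p` be the Hermite interpolant of `h` and `h'` at the `tⱼ`.
For `x ∈ [a,b]` not a node, choose `K` so that `g = h - p - K ∏ⱼ (· - tⱼ)²` vanishes at `x`;
`g` also vanishes at the `k` nodes, and so does `g'`. Rolle's theorem yields `2k` zeros of `g'`
and, applied `2k - 1` more times, a zero `ξₓ` of `g⁽²ᵏ⁾`, that is,
`h(x) - p(x) = h⁽²ᵏ⁾(ξₓ)/(2k)! ∏ⱼ (x - tⱼ)²`. Averaging this remainder against the nonnegative
weights `wᵢ ∏ⱼ (λᵢ - tⱼ)²` and the intermediate value theorem give a single `ξ`.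
-/

open Matrix

/-- A Lanczos relation of length `k` for an `n × n` Hermitian matrix `A` over `𝕜`
with starting unit vector `v`: orthonormal columns `V` with first column `v`, a real
symmetric tridiagonal matrix `T` with positive subdiagonal, `β > 0` and a unit vector
`vNext` orthogonal to the columns of `V`, such that `A V = V T + β vNext eₖ*`. -/
structure LanczosRelation (𝕜 : Type) [RCLike 𝕜] (n k : ℕ)
    (A : Matrix (Fin n) (Fin n) 𝕜) (v : Fin n → 𝕜) where
  kpos : 0 < k
  V : Matrix (Fin n) (Fin k) 𝕜
  T : Matrix (Fin k) (Fin k) ℝ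
  β : ℝ
  vNext : Fin n → 𝕜
  orthonormal : Vᴴ * V = 1
  firstCol : (fun i => V i ⟨0, kpos⟩) = v
  symm : T.IsHermitian
  tridiag : ∀ i j : Fin k, (i : ℕ) + 1 < (j : ℕ) → T i j = 0
  subdiag_pos : ∀ (i : ℕ) (h : i + 1 < k), 0 < T ⟨i + 1, h⟩ ⟨i, by omega⟩
  β_pos : 0 < β
  vNext_unit : star vNext ⬝ᵥ vNext = 1
  vNext_orth : Vᴴ *ᵥ vNext = 0
  relation : A * V = V * T.map (algebraMap ℝ 𝕜) +
      (algebraMap ℝ 𝕜 β) • vecMulVec vNext (Pi.single ⟨k - 1, by omega⟩ 1)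

section Quadrature

open Set Polynomial

theorem Polynomial.iterate_derivative_of_natDegree_le {R : Type*} [Semiring R] {p : R[X]}
    {n : ℕ} (hp : p.natDegree ≤ n) : derivative^[n] p = C ((n.factorial : R) * p.coeff n) := by
  rw [eq_C_of_natDegree_le_zero ((natDegree_iterate_derivative p n).trans (by omega)),
    coeff_iterate_derivative, zero_add, Nat.descFactorial_self, nsmul_eq_mul]

theorem Polynomial.eq_zero_of_eval_eq_zero_of_eval_derivative_eq_zero {K ι : Type*} [Field K]
    [Fintype ι] {t : ι → K} (ht : Function.Injective t) {p : K[X]}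
    (hp : p.degree < ↑(2 * Fintype.card ι)) (h0 : ∀ j, p.eval (t j) = 0)
    (h1 : ∀ j, p.derivative.eval (t j) = 0) : p = 0 := by
  by_contra hp0
  have hdvd : Lagrange.nodal Finset.univ t ^ 2 ∣ p := by
    rw [Lagrange.nodal, ← Finset.prod_pow]
    refine Fintype.prod_dvd_of_coprime (fun i j hij => ((pairwise_coprime_X_sub_C ht hij).pow))
      fun j => (le_rootMultiplicity_iff hp0).1 ?_
    exact (one_lt_rootMultiplicity_iff_isRoot hp0).2 ⟨h0 j, h1 j⟩
  have hdeg := natDegree_le_of_dvd hdvd hp0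
  rw [natDegree_pow, Lagrange.natDegree_nodal, Finset.card_univ] at hdeg
  have := (natDegree_lt_iff_degree_lt hp0).2 hp
  omega

theorem Polynomial.exists_hermite_interpolant {K ι : Type*} [Field K] [Fintype ι]
    {t : ι → K} (ht : Function.Injective t) (y y' : ι → K) :
    ∃ p : K[X], p.degree < ↑(2 * Fintype.card ι) ∧ (∀ j, p.eval (t j) = y j) ∧
      ∀ j, p.derivative.eval (t j) = y' j := by
  let E : degreeLT K (2 * Fintype.card ι) →ₗ[K] (ι → K) × (ι → K) :=
    { toFun := fun p => (fun j => (p : K[X]).eval (t j), fun j => (p : K[X]).derivative.eval (t j))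
      map_add' := by intro p q; ext j <;> simp
      map_smul' := by intro c p; ext j <;> simp }
  have hinj : Function.Injective E := by
    rw [← LinearMap.ker_eq_bot, LinearMap.ker_eq_bot']
    intro p hp
    exact Subtype.ext <| eq_zero_of_eval_eq_zero_of_eval_derivative_eq_zero ht
      (mem_degreeLT.1 p.2) (congrFun (congrArg Prod.fst hp)) (congrFun (congrArg Prod.snd hp))
  have hfin : Module.finrank K (degreeLT K (2 * Fintype.card ι)) =
      Module.finrank K ((ι → K) × (ι → K)) := by
    rw [(degreeLTEquiv K _).finrank_eq]
    simp [Module.finrank_prod, two_mul]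
  have : FiniteDimensional K (degreeLT K (2 * Fintype.card ι)) :=
    Module.Finite.equiv (degreeLTEquiv K _).symm
  obtain ⟨p, hp⟩ := (LinearMap.injective_iff_surjective_of_finrank_eq_finrank hfin).1 hinj (y, y')
  exact ⟨p, mem_degreeLT.1 p.2, congrFun (congrArg Prod.fst hp), congrFun (congrArg Prod.snd hp)⟩

theorem Polynomial.sum_mul_eval_eq_sum_coeff_mul {R σ : Type*} [CommSemiring R] [Fintype σ]
    {p : R[X]} {N : ℕ} (hN : p.natDegree < N) (u z : σ → R) :
    ∑ i, u i * p.eval (z i) = ∑ m ∈ Finset.range N, p.coeff m * ∑ i, u i * z i ^ m := by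
  simp only [eval_eq_sum_range' hN, Finset.mul_sum]
  rw [Finset.sum_comm]
  exact Finset.sum_congr rfl fun _ _ => Finset.sum_congr rfl fun _ _ => by ring

theorem sum_mul_eval_eq_of_sum_mul_pow_eq {R ι κ : Type*} [CommSemiring R] [Fintype ι]
    [Fintype κ] {N : ℕ} {w x : ι → R} {μ t : κ → R}
    (hmom : ∀ m < N, ∑ i, w i * x i ^ m = ∑ j, μ j * t j ^ m) {p : R[X]}
    (hp : p.degree < N) : ∑ i, w i * p.eval (x i) = ∑ j, μ j * p.eval (t j) := by
  rcases eq_or_ne p 0 with rfl | hp0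
  · simp
  have hN := (natDegree_lt_iff_degree_lt hp0).2 hp
  rw [sum_mul_eval_eq_sum_coeff_mul hN, sum_mul_eval_eq_sum_coeff_mul hN]
  exact Finset.sum_congr rfl fun m hm => by rw [hmom m (Finset.mem_range.1 hm)]

theorem ContDiffOn.hasDerivAt_iteratedDeriv {f : ℝ → ℝ} {s : Set ℝ} (hs : IsOpen s) {N : ℕ}
    (hf : ContDiffOn ℝ N f s) {j : ℕ} (hj : j < N) {x : ℝ} (hx : x ∈ s) :
    HasDerivAt (iteratedDeriv j f) (iteratedDeriv (j + 1) f x) x := by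
  have hd : DifferentiableOn ℝ (iteratedDeriv j f) s :=
    (hf.differentiableOn_iteratedDerivWithin (by exact_mod_cast hj) hs.uniqueDiffOn).congr
      fun y hy => (iteratedDerivWithin_of_isOpen hs hy).symm
  rw [iteratedDeriv_succ]
  exact (hd.differentiableAt (hs.mem_nhds hx)).hasDerivAt

theorem ContDiffOn.continuousOn_iteratedDeriv {f : ℝ → ℝ} {s : Set ℝ} (hs : IsOpen s) {N : ℕ}
    (hf : ContDiffOn ℝ N f s) : ContinuousOn (iteratedDeriv N f) s :=
  (hf.continuousOn_iteratedDerivWithin le_rfl hs.uniqueDiffOn).congr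
    fun _ hy => (iteratedDerivWithin_of_isOpen hs hy).symm

theorem exists_deriv_zeros_interleaved {g g' : ℝ → ℝ} {s : Set ℝ} (hs : s.OrdConnected)
    (hg : ∀ x ∈ s, HasDerivAt g (g' x) x) {Z : Finset ℝ} (hZs : ↑Z ⊆ s)
    (hZ : ∀ x ∈ Z, g x = 0) :
    ∃ Z' : Finset ℝ, Z.card ≤ (Z' \ Z).card + 1 ∧
      ∀ z ∈ Z', g' z = 0 ∧ ∃ x ∈ Z, ∃ y ∈ Z, z ∈ Ioo x y := by
  have rolle : ∀ p : ℝ × ℝ, ∃ z, p ∈ Z ×ˢ Z → p.1 < p.2 → z ∈ Ioo p.1 p.2 ∧ g' z = 0 := by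
    rintro ⟨x, y⟩
    by_cases hxy : (x, y) ∈ Z ×ˢ Z ∧ x < y
    · obtain ⟨⟨hx, hy⟩, hlt⟩ := Finset.mem_product.1 hxy.1, hxy.2
      have hsub : Icc x y ⊆ s := hs.out (hZs hx) (hZs hy)
      obtain ⟨z, hz, hz'⟩ := exists_hasDerivAt_eq_zero hlt
        (fun u hu => (hg u (hsub hu)).continuousAt.continuousWithinAt)
        ((hZ x hx).trans (hZ y hy).symm) (fun u hu => hg u (hsub (Ioo_subset_Icc_self hu)))
      exact ⟨z, fun _ _ => ⟨hz, hz'⟩⟩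
    · exact ⟨0, fun hp hlt => absurd ⟨hp, hlt⟩ hxy⟩
  choose r hr using rolle
  refine ⟨((Z ×ˢ Z).filter fun p => p.1 < p.2).image r,
    Finset.card_le_sdiff_of_interleaved fun x hx y hy hxy _ => ?_, ?_⟩
  · obtain ⟨hz, -⟩ := hr (x, y) (Finset.mem_product.2 ⟨hx, hy⟩) hxy
    exact ⟨r (x, y), Finset.mem_image_of_mem _ (by simp [hx, hy, hxy]), hz⟩
  · simp only [Finset.mem_image, Finset.mem_filter, Finset.mem_product]
    rintro _ ⟨⟨x, y⟩, ⟨⟨hx, hy⟩, hxy⟩, rfl⟩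
    obtain ⟨hz, hz'⟩ := hr (x, y) (Finset.mem_product.2 ⟨hx, hy⟩) hxy
    exact ⟨hz', x, hx, y, hy, hz⟩

theorem exists_iterate_zero_of_card_zeros {s : Set ℝ} (hs : s.OrdConnected) {N : ℕ}
    {G : ℕ → ℝ → ℝ} (hG : ∀ j < N, ∀ x ∈ s, HasDerivAt (G j) (G (j + 1) x) x)
    {Z : Finset ℝ} (hZs : ↑Z ⊆ s) (hcard : N < Z.card) (hZ : ∀ x ∈ Z, G 0 x = 0) :
    ∃ ξ ∈ s, G N ξ = 0 := by
  induction N generalizing G Z with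
  | zero =>
    obtain ⟨x, hx⟩ := Finset.card_pos.1 hcard
    exact ⟨x, hZs hx, hZ x hx⟩
  | succ N ih =>
    obtain ⟨Z', hZ'card, hZ'⟩ :=
      exists_deriv_zeros_interleaved hs (hG 0 N.succ_pos) hZs hZ
    refine ih (G := fun j => G (j + 1)) (Z := Z' \ Z) (fun j hj => hG (j + 1) (by omega))
      (fun z hz => ?_) (by omega) fun z hz => (hZ' z (Finset.mem_sdiff.1 hz).1).1
    obtain ⟨-, x, hx, y, hy, hz⟩ := hZ' z (Finset.mem_sdiff.1 hz).1
    exact hs.out (hZs hx) (hZs hy) (Ioo_subset_Icc_self hz)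

theorem IsPreconnected.exists_sum_mul_eq {ι : Type*} [Fintype ι] {s : Set ℝ}
    (hs : IsPreconnected s) (hne : s.Nonempty) {D : ℝ → ℝ} (hD : ContinuousOn D s)
    {w ξ : ι → ℝ} (hw : ∀ i, 0 ≤ w i) (hξ : ∀ i, ξ i ∈ s) :
    ∃ x ∈ s, ∑ i, w i * D (ξ i) = (∑ i, w i) * D x := by
  rcases (Finset.sum_nonneg fun i _ => hw i).eq_or_lt with hW | hW
  · obtain ⟨x, hx⟩ := hne
    have hw0 := (Finset.sum_eq_zero_iff_of_nonneg fun i _ => hw i).1 hW.symm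
    refine ⟨x, hx, ?_⟩
    rw [← hW, zero_mul]
    exact Finset.sum_eq_zero fun i hi => by rw [hw0 i hi, zero_mul]
  · have hconv : Convex ℝ (D '' s) := (hs.image D hD).ordConnected.convex
    obtain ⟨x, hx, hDx⟩ := hconv.centerMass_mem (t := Finset.univ) (fun i _ => hw i) hW
      fun i _ => mem_image_of_mem D (hξ i)
    refine ⟨x, hx, ?_⟩
    rw [hDx, Finset.centerMass, smul_eq_mul, mul_inv_cancel_left₀ hW.ne']
    rfl

theorem exists_iterate_zero_of_zeros_of_double_zeros {ι : Type*} [Fintype ι] [Nonempty ι]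
    {a b : ℝ} {G : ℕ → ℝ → ℝ}
    (hG : ∀ j < 2 * Fintype.card ι, ∀ s ∈ Icc a b, HasDerivAt (G j) (G (j + 1) s) s)
    {t : ι → ℝ} (ht : ∀ j, t j ∈ Ioo a b) (htinj : Function.Injective t) {x : ℝ}
    (hx : x ∈ Icc a b) (hxt : ∀ j, x ≠ t j) (hGx : G 0 x = 0) (hG0 : ∀ j, G 0 (t j) = 0)
    (hG1 : ∀ j, G 1 (t j) = 0) : ∃ ξ ∈ Ioo a b, G (2 * Fintype.card ι) ξ = 0 := by
  have hk := Fintype.card_pos (α := ι)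
  set T := Finset.univ.image t
  have hxT : x ∉ T := by simpa [T, eq_comm] using hxt
  have hTcard : T.card = Fintype.card ι := Finset.card_image_of_injective _ htinj
  have hS : ↑(insert x T) ⊆ Icc a b := by
    simpa [T, insert_subset_iff, range_subset_iff, hx] using fun j => Ioo_subset_Icc_self (ht j)
  -- `card ι` zeros of `G 1` strictly between those of `G 0`, plus the nodes
  obtain ⟨Z', hZ'card, hZ'⟩ := exists_deriv_zeros_interleaved ordConnected_Icc
    (hG 0 (by omega)) hS (by simpa [T, hGx] using hG0)
  have hZ₁ : ↑((Z' \ insert x T) ∪ T) ⊆ Ioo a b := by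
    intro s hs
    rcases Finset.mem_union.1 hs with hs | hs
    · obtain ⟨-, u, hu, v, hv, hs⟩ := hZ' s (Finset.mem_sdiff.1 hs).1
      exact ⟨(hS hu).1.trans_lt hs.1, hs.2.trans_le (hS hv).2⟩
    · obtain ⟨j, -, rfl⟩ := Finset.mem_image.1 hs
      exact ht j
  have hZ₁card : 2 * Fintype.card ι - 1 < ((Z' \ insert x T) ∪ T).card := by
    rw [Finset.card_union_of_disjoint (Finset.disjoint_left.2 fun s hs hsT =>
      (Finset.mem_sdiff.1 hs).2 (Finset.mem_insert_of_mem hsT))]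
    rw [Finset.card_insert_of_notMem hxT] at hZ'card
    omega
  obtain ⟨ξ, hξ, hGξ⟩ := exists_iterate_zero_of_card_zeros ordConnected_Ioo
    (G := fun j => G (j + 1)) (fun j hj s hs => hG (j + 1) (by omega) s (Ioo_subset_Icc_self hs))
    hZ₁ hZ₁card fun s hs => by
      rcases Finset.mem_union.1 hs with hs | hs
      · exact (hZ' s (Finset.mem_sdiff.1 hs).1).1
      · obtain ⟨j, -, rfl⟩ := Finset.mem_image.1 hs
        exact hG1 j
  exact ⟨ξ, hξ, by rwa [Nat.sub_add_cancel (by omega)] at hGξ⟩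

theorem Lagrange.iterate_derivative_nodal_sq {K ι : Type*} [Field K] [Fintype ι] (t : ι → K) :
    derivative^[2 * Fintype.card ι] (nodal Finset.univ t ^ 2) =
      C ((2 * Fintype.card ι).factorial : K) := by
  have hdeg : (nodal Finset.univ t ^ 2).natDegree = 2 * Fintype.card ι := by
    rw [natDegree_pow, natDegree_nodal, Finset.card_univ]
  rw [iterate_derivative_of_natDegree_le hdeg.le, ← hdeg, (nodal_monic.pow 2).coeff_natDegree,
    mul_one]

theorem exists_hermite_remainder {ι : Type*} [Fintype ι] [Nonempty ι] {a b c d : ℝ}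
    (hcd : Icc a b ⊆ Ioo c d) {h : ℝ → ℝ}
    (hh : ContDiffOn ℝ (2 * Fintype.card ι) h (Ioo c d)) {t : ι → ℝ}
    (ht : ∀ j, t j ∈ Ioo a b) (htinj : Function.Injective t) {p : ℝ[X]}
    (hp : p.degree < ↑(2 * Fintype.card ι)) (hpt : ∀ j, p.eval (t j) = h (t j))
    (hp't : ∀ j, p.derivative.eval (t j) = deriv h (t j)) {x : ℝ} (hx : x ∈ Icc a b) :
    ∃ ξ ∈ Ioo a b, h x - p.eval x =
      iteratedDeriv (2 * Fintype.card ι) h ξ / (2 * Fintype.card ι).factorial *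
        (∏ j, (x - t j)) ^ 2 := by
  set N := 2 * Fintype.card ι
  set ω := Lagrange.nodal Finset.univ t ^ 2
  have hωeval : ∀ s, ω.eval s = (∏ j, (s - t j)) ^ 2 := by simp [ω, Lagrange.eval_nodal]
  have hωt : ∀ j, ω.eval (t j) = 0 := by
    simp [ω, Lagrange.eval_nodal_at_node (Finset.mem_univ _)]
  have hω't : ∀ j, ω.derivative.eval (t j) = 0 := by
    simp [ω, derivative_pow, Lagrange.eval_nodal_at_node (Finset.mem_univ _)]
  by_cases hxt : ∃ j, x = t j
  · obtain ⟨j, rfl⟩ := hxt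
    refine ⟨t j, ht j, ?_⟩
    rw [hpt j, sub_self, Finset.prod_eq_zero (Finset.mem_univ j) (sub_self _)]
    ring
  push Not at hxt
  have hωx : ω.eval x ≠ 0 := by
    rw [hωeval]
    exact pow_ne_zero _ (Finset.prod_ne_zero_iff.2 fun j _ => sub_ne_zero.2 (hxt j))
  -- `K` is chosen so that `P` interpolates `h` at `x` as well
  set K := (h x - p.eval x) / ω.eval x
  set P := p + C K * ω
  set G : ℕ → ℝ → ℝ := fun j s => iteratedDeriv j h s - (derivative^[j] P).eval s
  have hG : ∀ j < N, ∀ s ∈ Icc a b, HasDerivAt (G j) (G (j + 1) s) s := fun j hj s hs => by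
    simp only [G, Function.iterate_succ_apply']
    exact (hh.hasDerivAt_iteratedDeriv isOpen_Ioo hj (hcd hs)).sub (Polynomial.hasDerivAt _ s)
  obtain ⟨ξ, hξ, hGξ⟩ := exists_iterate_zero_of_zeros_of_double_zeros hG ht htinj hx hxt
    (by simp [G, P, K, hωx]) (fun j => by simp [G, P, hpt j, hωt j])
    (fun j => by simp [G, P, hp't j, hω't j])
  have hPN : derivative^[N] P = C (N.factorial * K) := by
    rw [iterate_map_add, iterate_derivative_C_mul, Lagrange.iterate_derivative_nodal_sq,
      iterate_derivative_eq_zero_of_degree_lt hp, zero_add, ← C_mul, mul_comm]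
  have hξK : iteratedDeriv N h ξ = N.factorial * K := by
    have hGN : iteratedDeriv N h ξ - (derivative^[N] P).eval ξ = 0 := hGξ
    rwa [hPN, eval_C, sub_eq_zero] at hGN
  refine ⟨ξ, hξ, ?_⟩
  rw [hξK, ← hωeval, mul_div_cancel_left₀ _ (Nat.cast_ne_zero.2 N.factorial_ne_zero)]
  exact (div_mul_cancel₀ _ hωx).symm

theorem exists_quadrature_error {ι κ : Type*} [Fintype ι] [Fintype κ] [Nonempty κ]
    {a b c d : ℝ} (hcd : Icc a b ⊆ Ioo c d) {h : ℝ → ℝ}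
    (hh : ContDiffOn ℝ (2 * Fintype.card κ) h (Ioo c d)) {w x : ι → ℝ} (hw : ∀ i, 0 ≤ w i)
    (hx : ∀ i, x i ∈ Icc a b) {μ t : κ → ℝ} (ht : ∀ j, t j ∈ Ioo a b)
    (htinj : Function.Injective t)
    (hmom : ∀ m < 2 * Fintype.card κ, ∑ i, w i * x i ^ m = ∑ j, μ j * t j ^ m) :
    ∃ ξ ∈ Ioo a b, ∑ i, w i * h (x i) = ∑ j, μ j * h (t j) +
      iteratedDeriv (2 * Fintype.card κ) h ξ / (2 * Fintype.card κ).factorial *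
        ∑ i, w i * (∏ j, (x i - t j)) ^ 2 := by
  set N := 2 * Fintype.card κ
  obtain ⟨p, hp, hpt, hp't⟩ := exists_hermite_interpolant htinj (h ∘ t) (deriv h ∘ t)
  choose ξ hξ hrem using fun i =>
    exists_hermite_remainder hcd hh ht htinj hp hpt hp't (hx i)
  obtain ⟨ζ, hζ, hmean⟩ := isPreconnected_Ioo.exists_sum_mul_eq
    (nonempty_of_mem (ht (Classical.arbitrary κ)))
    (((hh.continuousOn_iteratedDeriv isOpen_Ioo).mono (Ioo_subset_Icc_self.trans hcd)).div_const
      (N.factorial : ℝ)) (fun i => mul_nonneg (hw i) (sq_nonneg (∏ j, (x i - t j)))) hξ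
  refine ⟨ζ, hζ, ?_⟩
  calc ∑ i, w i * h (x i)
      = ∑ i, w i * p.eval (x i) + ∑ i, w i * (h (x i) - p.eval (x i)) := by
        rw [← Finset.sum_add_distrib]; simp only [mul_sub, add_sub_cancel]
    _ = ∑ j, μ j * h (t j) + iteratedDeriv N h ζ / N.factorial *
          ∑ i, w i * (∏ j, (x i - t j)) ^ 2 := by
        rw [sum_mul_eval_eq_of_sum_mul_pow_eq hmom hp, mul_comm, ← hmean]
        simp only [hpt, hrem, Function.comp_apply]
        congr 1
        exact Finset.sum_congr rfl fun i _ => by ring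

end Quadrature

namespace Matrix

theorem star_mulVec_dotProduct_mulVec {𝕜 l m n : Type*} [RCLike 𝕜] [Fintype l] [Fintype m]
    [Fintype n] (V : Matrix m l 𝕜) (M : Matrix m m 𝕜) (W : Matrix m n 𝕜) (y : l → 𝕜)
    (z : n → 𝕜) : star (V *ᵥ y) ⬝ᵥ M *ᵥ (W *ᵥ z) = star y ⬝ᵥ (Vᴴ * M * W) *ᵥ z := by
  simp only [star_mulVec, dotProduct_mulVec, vecMul_vecMul, Matrix.mul_assoc]

section Hermitian

variable {𝕜 ι : Type*} [RCLike 𝕜] [Fintype ι] [DecidableEq ι]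

noncomputable def IsHermitian.spectralWeight {A : Matrix ι ι 𝕜} (hA : A.IsHermitian)
    (v : ι → 𝕜) (i : ι) : ℝ :=
  ‖(star (hA.eigenvectorUnitary : Matrix ι ι 𝕜) *ᵥ v) i‖ ^ 2

theorem IsHermitian.spectralWeight_nonneg {A : Matrix ι ι 𝕜} (hA : A.IsHermitian) (v : ι → 𝕜)
    (i : ι) : 0 ≤ hA.spectralWeight v i :=
  sq_nonneg _

theorem IsHermitian.star_dotProduct_cfc_mulVec {A : Matrix ι ι 𝕜} (hA : A.IsHermitian)
    (v : ι → 𝕜) (f : ℝ → ℝ) :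
    star v ⬝ᵥ hA.cfc f *ᵥ v = ((∑ i, hA.spectralWeight v i * f (hA.eigenvalues i) : ℝ) : 𝕜) := by
  set U := (hA.eigenvectorUnitary : Matrix ι ι 𝕜)
  calc star v ⬝ᵥ hA.cfc f *ᵥ v
      = star (star U *ᵥ v) ⬝ᵥ diagonal (RCLike.ofReal ∘ f ∘ hA.eigenvalues) *ᵥ (star U *ᵥ v) := by
        rw [star_mulVec_dotProduct_mulVec, star_eq_conjTranspose, conjTranspose_conjTranspose]
        rfl
    _ = _ := by
        simp only [dotProduct, mulVec_diagonal, spectralWeight, Pi.star_apply, RCLike.star_def,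
          Function.comp_apply]
        push_cast
        refine Finset.sum_congr rfl fun i _ => ?_
        rw [← RCLike.conj_mul]
        ring

theorem IsHermitian.cfc_pow {A : Matrix ι ι 𝕜} (hA : A.IsHermitian) (m : ℕ) :
    hA.cfc (· ^ m) = A ^ m := by
  rw [← hA.cfc_eq]
  exact cfc_pow_id A m hA

end Hermitian

section Hessenberg

variable {R : Type*} {k : ℕ}

theorem pow_mulVec_single_apply_eq_zero [Semiring R] {M : Matrix (Fin k) (Fin k) R}
    (hM : ∀ i j : Fin k, (j : ℕ) + 1 < i → M i j = 0) (j₀ : Fin k) {m : ℕ} {i : Fin k}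
    (hi : (j₀ : ℕ) + m < i) : (M ^ m *ᵥ Pi.single j₀ 1) i = 0 := by
  induction m generalizing i with
  | zero =>
    rw [pow_zero, one_mulVec]
    exact Pi.single_eq_of_ne (by rintro rfl; simp at hi) _
  | succ m ih =>
    rw [pow_succ', ← mulVec_mulVec]
    show ∑ j, M i j * (M ^ m *ᵥ Pi.single j₀ 1) j = 0
    refine Finset.sum_eq_zero fun j _ => ?_
    rcases lt_or_ge ((j₀ : ℕ) + m) j with hj | hj
    · rw [ih hj, mul_zero]
    · rw [hM i j (by omega), zero_mul]

theorem eq_zero_of_mulVec_eq_smul [Semiring R] [NoZeroDivisors R] {M : Matrix (Fin k) (Fin k) R}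
    (hM : ∀ i j : Fin k, (i : ℕ) + 1 < j → M i j = 0)
    (hsup : ∀ i j : Fin k, (j : ℕ) = i + 1 → M i j ≠ 0) {x : Fin k → R} {c : R}
    (hx : M *ᵥ x = c • x) (hk : 0 < k) (hx₀ : x ⟨0, hk⟩ = 0) : x = 0 := by
  suffices ∀ m, ∀ i : Fin k, (i : ℕ) ≤ m → x i = 0 from funext fun i => this i i le_rfl
  intro m
  induction m with
  | zero => intro i hi; rwa [show i = ⟨0, hk⟩ from Fin.ext (Nat.le_zero.1 hi)]
  | succ m ih =>
    intro i hi
    rcases hi.lt_or_eq with hi | hi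
    · exact ih i (by omega)
    set i' : Fin k := ⟨m, by omega⟩
    -- row `m` of `M x = c x` involves `x` only up to index `m + 1`
    have hrow : (M *ᵥ x) i' = M i' i * x i := by
      rw [mulVec, dotProduct, Finset.sum_eq_single i]
      · intro j _ hj
        rcases le_or_gt (j : ℕ) m with hjm | hjm
        · rw [ih j hjm, mul_zero]
        · rw [hM i' j (by simp only [i']; omega), zero_mul]
      · simp
    rw [hx, Pi.smul_apply, ih i' le_rfl, smul_zero, eq_comm] at hrow
    exact (mul_eq_zero.1 hrow).resolve_left (hsup i' i (by simp [i', hi]))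

end Hessenberg

end Matrix

namespace LanczosRelation

variable {𝕜 : Type} [RCLike 𝕜] {n k : ℕ} {A : Matrix (Fin n) (Fin n) 𝕜} {v : Fin n → 𝕜}
  (L : LanczosRelation 𝕜 n k A v)

theorem T_apply_comm (i j : Fin k) : L.T i j = L.T j i :=
  (L.symm.apply i j).symm.trans (star_trivial _)

theorem T_eq_zero_of_add_one_lt {i j : Fin k} (h : (j : ℕ) + 1 < i) : L.T i j = 0 :=
  (L.T_apply_comm i j).trans (L.tridiag j i h)

theorem mulVec_V_mulVec (y : Fin k → 𝕜) :
    A *ᵥ (L.V *ᵥ y) = L.V *ᵥ (L.T.map (algebraMap ℝ 𝕜) *ᵥ y) +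
      (algebraMap ℝ 𝕜 L.β * y ⟨k - 1, by have := L.kpos; omega⟩) • L.vNext := by
  rw [mulVec_mulVec, L.relation, add_mulVec, ← mulVec_mulVec, smul_mulVec, vecMulVec_mulVec,
    single_dotProduct, one_mul, op_smul_eq_smul, smul_smul]

theorem conjTranspose_V_mul_mul_V : L.Vᴴ * A * L.V = L.T.map (algebraMap ℝ 𝕜) := by
  rw [Matrix.mul_assoc, L.relation, Matrix.mul_add, ← Matrix.mul_assoc, L.orthonormal,
    Matrix.one_mul, Matrix.mul_smul, mul_vecMulVec, L.vNext_orth, zero_vecMulVec, smul_zero,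
    add_zero]

theorem pow_mulVec_eq_V_mulVec {m : ℕ} (hm : m < k) :
    A ^ m *ᵥ v = L.V *ᵥ (L.T.map (algebraMap ℝ 𝕜) ^ m *ᵥ Pi.single ⟨0, L.kpos⟩ 1) := by
  induction m with
  | zero =>
    rw [pow_zero, one_mulVec, pow_zero, one_mulVec, mulVec_single_one]
    exact L.firstCol.symm
  | succ m ih =>
    have hlast : (L.T.map (algebraMap ℝ 𝕜) ^ m *ᵥ Pi.single ⟨0, L.kpos⟩ 1)
        ⟨k - 1, by omega⟩ = 0 :=
      pow_mulVec_single_apply_eq_zero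
        (fun i j h => by rw [map_apply, L.T_eq_zero_of_add_one_lt h, map_zero]) _
        (by simp only; omega)
    rw [pow_succ', ← mulVec_mulVec, ih (by omega), mulVec_V_mulVec, hlast, mul_zero, zero_smul,
      add_zero, pow_succ', ← mulVec_mulVec]

theorem star_dotProduct_pow_mulVec (hA : A.IsHermitian) {m : ℕ} (hm : m < 2 * k) :
    star v ⬝ᵥ A ^ m *ᵥ v =
      ((Pi.single ⟨0, L.kpos⟩ 1 ⬝ᵥ L.T ^ m *ᵥ Pi.single ⟨0, L.kpos⟩ 1 : ℝ) : 𝕜) := by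
  set T := L.T.map (algebraMap ℝ 𝕜)
  set e : Fin k → 𝕜 := Pi.single ⟨0, L.kpos⟩ 1
  have hT : T.IsHermitian := L.symm.map _ fun x => by simp
  -- `Vᴴ Aʳ V = Tʳ` holds only for `r ≤ 1`, so `m` is split as `p + r + q` with `p, q < k`
  obtain ⟨p, q, r, hp, hq, hr, rfl⟩ : ∃ p q r, p < k ∧ q < k ∧ r ≤ 1 ∧ m = p + r + q :=
    ⟨m / 2, m / 2, m % 2, by omega, by omega, by omega, by omega⟩
  have hVAV : L.Vᴴ * A ^ r * L.V = T ^ r := by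
    interval_cases r
    · rw [pow_zero, Matrix.mul_one, L.orthonormal, pow_zero]
    · rw [pow_one, pow_one, L.conjTranspose_V_mul_mul_V]
  calc star v ⬝ᵥ A ^ (p + r + q) *ᵥ v
      = star (A ^ p *ᵥ v) ⬝ᵥ A ^ r *ᵥ (A ^ q *ᵥ v) := by
        rw [star_mulVec_dotProduct_mulVec, (hA.pow p).eq, ← pow_add, ← pow_add]
    _ = star (T ^ p *ᵥ e) ⬝ᵥ T ^ r *ᵥ (T ^ q *ᵥ e) := by
        rw [L.pow_mulVec_eq_V_mulVec hp, L.pow_mulVec_eq_V_mulVec hq,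
          star_mulVec_dotProduct_mulVec, hVAV]
    _ = e ⬝ᵥ T ^ (p + r + q) *ᵥ e := by
        rw [star_mulVec_dotProduct_mulVec, (hT.pow p).eq, ← pow_add, ← pow_add]
        simp [e]
    _ = _ := by
        simp [e, T, single_dotProduct, ← Matrix.map_pow]

theorem eigenvalues_injective : Function.Injective L.symm.eigenvalues := by
  have hsup : ∀ i j : Fin k, (j : ℕ) = i + 1 → L.T i j ≠ 0 := by
    rintro ⟨i, hi⟩ ⟨j, hj⟩ (rfl : j = i + 1)
    exact (L.T_apply_comm _ _ ▸ L.subdiag_pos i hj).ne'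
  have hvec : ∀ {x : Fin k → ℝ} {c : ℝ}, L.T *ᵥ x = c • x → x ⟨0, L.kpos⟩ = 0 → x = 0 :=
    fun hx h₀ => eq_zero_of_mulVec_eq_smul L.tridiag hsup hx L.kpos h₀
  set b := L.symm.eigenvectorBasis
  have hdot : ∀ i j, (b i).ofLp ⬝ᵥ (b j).ofLp = if i = j then 1 else 0 := fun i j => by
    rw [← orthonormal_iff_ite.1 b.orthonormal i j, EuclideanSpace.inner_eq_star_dotProduct,
      star_trivial, dotProduct_comm]
  intro j j' hjj'
  by_contra hne
  set u := (b j).ofLp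
  set u' := (b j').ofLp
  have hu' : L.T *ᵥ u' = L.symm.eigenvalues j • u' := hjj' ▸ L.symm.mulVec_eigenvectorBasis j'
  -- this combination of two eigenvectors for the same eigenvalue vanishes at index `0`
  have hcomb : u' ⟨0, L.kpos⟩ • u - u ⟨0, L.kpos⟩ • u' = 0 := by
    refine hvec (c := L.symm.eigenvalues j) ?_ (by simp [mul_comm])
    rw [mulVec_sub, mulVec_smul, mulVec_smul, L.symm.mulVec_eigenvectorBasis j, hu', smul_sub,
      smul_comm _ (L.symm.eigenvalues j), smul_comm _ (L.symm.eigenvalues j)]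
  have huu : u ⬝ᵥ u = 1 := by simpa using hdot j j
  have huu' : u ⬝ᵥ u' = 0 := by simpa [hne] using hdot j j'
  have hu'₀ : u' ⟨0, L.kpos⟩ = 0 := by
    simpa [dotProduct_sub, huu, huu'] using congrArg (u ⬝ᵥ ·) hcomb
  exact b.orthonormal.ne_zero j' (WithLp.ofLp_injective 2 (hvec hu' hu'₀))

end LanczosRelation

theorem gauss_quadrature_error
    {n k : ℕ} {a b : ℝ} {A : Matrix (Fin n) (Fin n) ℂ} (hA : A.IsHermitian)
    (hspec : ∀ i, hA.eigenvalues i ∈ Set.Icc a b)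
    {v : Fin n → ℂ}
    (L : LanczosRelation ℂ n k A v)
    (ht : ∀ j, L.symm.eigenvalues j ∈ Set.Ioo a b)
    (h : ℝ → ℝ) (c d : ℝ) (hcd : Set.Icc a b ⊆ Set.Ioo c d)
    (hh : ContDiffOn ℝ (2 * k) h (Set.Ioo c d)) :
    ∃ ξ ∈ Set.Ioo a b,
      star v ⬝ᵥ (hA.cfc h) *ᵥ v
        = ((Pi.single (⟨0, L.kpos⟩ : Fin k) 1 ⬝ᵥ (L.symm.cfc h) *ᵥ
              Pi.single (⟨0, L.kpos⟩ : Fin k) 1 : ℝ) : ℂ)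
          + ((iteratedDeriv (2 * k) h ξ / (2 * k).factorial : ℝ) : ℂ)
            * (star v ⬝ᵥ (hA.cfc fun t => (∏ j, (t - L.symm.eigenvalues j)) ^ 2) *ᵥ v) := by
  set e : Fin k → ℝ := Pi.single ⟨0, L.kpos⟩ 1
  have : Nonempty (Fin k) := ⟨⟨0, L.kpos⟩⟩
  have hT : ∀ f : ℝ → ℝ, e ⬝ᵥ L.symm.cfc f *ᵥ e =
      ∑ j, L.symm.spectralWeight e j * f (L.symm.eigenvalues j) := fun f => by
    simpa using L.symm.star_dotProduct_cfc_mulVec e f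
  have hmom : ∀ m < 2 * Fintype.card (Fin k),
      ∑ i, hA.spectralWeight v i * hA.eigenvalues i ^ m =
        ∑ j, L.symm.spectralWeight e j * L.symm.eigenvalues j ^ m := by
    intro m hm
    have hA_m := hA.star_dotProduct_cfc_mulVec v (· ^ m)
    rw [hA.cfc_pow, L.star_dotProduct_pow_mulVec hA (by simpa using hm), ← L.symm.cfc_pow,
      hT] at hA_m
    exact_mod_cast hA_m.symm
  obtain ⟨ξ, hξ, hquad⟩ := exists_quadrature_error hcd (by simpa using hh)
    (hA.spectralWeight_nonneg v) hspec ht L.eigenvalues_injective hmom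
  refine ⟨ξ, hξ, ?_⟩
  rw [hA.star_dotProduct_cfc_mulVec, hA.star_dotProduct_cfc_mulVec, hT,
    RCLike.ofReal_eq_complex_ofReal]
  simp only [Fintype.card_fin] at hquad
  exact_mod_cast hquad
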